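/- Let [T1,T1'] and [T2,T2'] be two Tamari intervals of size n with interval-posets I1 = IP[T1,T1'] and I2 = IP[T2,T2']. Then the interval [T1,T1'] is contained in [T2,T2'] (i.e. T2 ≤ T1 and T1' ≤ T2' in the Tamari order) if and only if every relation of I2 is a relation of I1. -/

import Mathlib

open Polynomial

/-- A binary tree: either the empty tree or a pair of binary trees
(left and right subtrees) grafted on an internal node. -/
inductive BinTree : Type
  | leaf : BinTree
  | node : BinTree → BinTree → BinTree

namespace BinTree

/-- The size of a binary tree: its number of internal nodes. -/
def size : BinTree → ℕ
  | leaf => 0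
  | node l r => l.size + r.size + 1

/-- One right rotation somewhere in the tree: `Rot T T'` means that `T'` is obtained
from `T` by replacing one subtree of the form `y(x(A,B),C)` by `x(A,y(B,C))`. -/
inductive Rot : BinTree → BinTree → Prop
  | root (A B C : BinTree) : Rot (node (node A B) C) (node A (node B C))
  | left {L L' : BinTree} (R : BinTree) : Rot L L' → Rot (node L R) (node L' R)
  | right (L : BinTree) {R R' : BinTree} : Rot R R' → Rot (node L R) (node L R')

/-- The Tamari order: `TamariLE T T'` iff `T'` is obtained from `T` by a (possibly empty)
sequence of right rotations. -/
def TamariLE (T T' : BinTree) : Prop := Relation.ReflTransGen Rot T T'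

/-- The Tamari polynomial `B_T ∈ ℤ[x]`: `B_∅ = 1` and for `T = x(L,R)`, `B_T` is the
unique polynomial with `(x-1)·B_T = x·B_L·(x·B_R - B_R(1))` (exact division by the
monic polynomial `X - 1`, the right-hand side vanishing at `x = 1`). -/
noncomputable def tamPoly : BinTree → Polynomial ℤ
  | leaf => 1
  | node l r =>
      (X * tamPoly l * (X * tamPoly r - C ((tamPoly r).eval 1))) /ₘ (X - C 1)

/-- The mirror Tamari polynomial, obtained by exchanging the roles of the left and
right subtrees in the recursive definition of the Tamari polynomial. -/
noncomputable def tamPolyMirror : BinTree → Polynomial ℤ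
  | leaf => 1
  | node l r =>
      (X * tamPolyMirror r * (X * tamPolyMirror l - C ((tamPolyMirror l).eval 1))) /ₘ (X - C 1)

/-- The number of nodes on the left border of a binary tree. -/
def leftBorder : BinTree → ℕ
  | leaf => 0
  | node l _ => l.leftBorder + 1

/-- The number of nodes on the right border of a binary tree. -/
def rightBorder : BinTree → ℕ
  | leaf => 0
  | node _ r => r.rightBorder + 1

/-- `inSub T a b`: in the unique binary-search-tree labelling of `T` by `1,…,size T`
(all labels of the left subtree of a node are smaller than its label, all labels of its
right subtree are larger), the node labelled `a` belongs to the subtree rooted at the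
node labelled `b` (in particular `inSub T a a` holds for every node label `a`). -/
def inSub : BinTree → ℕ → ℕ → Prop
  | leaf => fun _ _ => False
  | node l r => fun a b =>
      (b = l.size + 1 ∧ 1 ≤ a ∧ a ≤ l.size + r.size + 1) ∨
      inSub l a b ∨
      (l.size + 1 < a ∧ l.size + 1 < b ∧ inSub r (a - (l.size + 1)) (b - (l.size + 1)))

/-- The binary search tree poset of `T`: `bstRel T a b` iff `a ≺_T b`, i.e. `a ≠ b` and
the node labelled `a` is in the subtree rooted at the node labelled `b`. -/
def bstRel (T : BinTree) (a b : ℕ) : Prop := a ≠ b ∧ inSub T a b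

/-- The increasing forest `inc(T)`: `a ≺ b` iff `a < b` and `a ≺_T b`. -/
def incRel (T : BinTree) (a b : ℕ) : Prop := a < b ∧ bstRel T a b

/-- The decreasing forest `dec(T)`: `b ≺ a` iff `b > a` and `b ≺_T a`. -/
def decRel (T : BinTree) (a b : ℕ) : Prop := b < a ∧ bstRel T a b

/-- The relations of the interval-poset `IP[T,T']`: exactly those of `dec(T)`
together with those of `inc(T')`. -/
def IPrel (T T' : BinTree) (a b : ℕ) : Prop := decRel T a b ∨ incRel T' a b

end BinTree

open BinTree

/-- `σ` is a linear extension of the strict relation `rel` on `{1,…,n}`: reading the word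
`σ(1)…σ(n)` (the `i`-th letter being the label `(σ i : ℕ) + 1`), whenever `rel a b` holds
the letter `a` appears before the letter `b`. -/
def IsLinExt (n : ℕ) (rel : ℕ → ℕ → Prop) (σ : Equiv.Perm (Fin n)) : Prop :=
  ∀ i j : Fin n, rel ((σ i : ℕ) + 1) ((σ j : ℕ) + 1) → i < j

/-- An interval-poset of size `n`: a (strict) poset on `{1,…,n}` such that
`a ≺ c` implies `b ≺ c` for all `a < b < c`, and `c ≺ a` implies `b ≺ a` for all
`a < b < c`. -/
def IsIntervalPoset (n : ℕ) (rel : ℕ → ℕ → Prop) : Prop :=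
  (∀ a b, rel a b → 1 ≤ a ∧ a ≤ n ∧ 1 ≤ b ∧ b ≤ n) ∧
  (∀ a, ¬ rel a a) ∧
  (∀ a b c, rel a b → rel b c → rel a c) ∧
  (∀ a b c, a < b → b < c → rel a c → rel b c) ∧
  (∀ a b c, a < b → b < c → rel c a → rel b a)

/-- `trees(P)` : the number of connected components of the forest formed by the decreasing
relations of `P`, i.e. the number of `k ∈ {1,…,n}` such that there is no `j < k`
with `k ≺_P j`. -/
noncomputable def treeStat (n : ℕ) (rel : ℕ → ℕ → Prop) : ℕ :=
  Set.ncard {k : ℕ | 1 ≤ k ∧ k ≤ n ∧ ∀ j, j < k → ¬ rel k j}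

/-- The composition `𝔹(I1,I2)` of two interval-posets of sizes `k1` and `k2`:
the set of interval-posets `I` of size `k1+k2+1` such that
(i) the relations of `I` among `1,…,k1` are exactly those of `I1`,
(ii) the relations of `I` among `k1+2,…,k1+k2+1` are exactly those of `I2` shifted
by `k1+1`, (iii) `i ≺_I k1+1` for all `i ≤ k1`, and (iv) there is no relation
`k1+1 ≺_I j` for `j > k1+1`. -/
def Comp (k1 k2 : ℕ) (I1 I2 : ℕ → ℕ → Prop) : Set (ℕ → ℕ → Prop) :=
  {I | IsIntervalPoset (k1 + k2 + 1) I ∧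
    (∀ a b, 1 ≤ a → a ≤ k1 → 1 ≤ b → b ≤ k1 → (I a b ↔ I1 a b)) ∧
    (∀ a b, k1 + 2 ≤ a → a ≤ k1 + k2 + 1 → k1 + 2 ≤ b → b ≤ k1 + k2 + 1 →
      (I a b ↔ I2 (a - (k1 + 1)) (b - (k1 + 1)))) ∧
    (∀ i, 1 ≤ i → i ≤ k1 → I i (k1 + 1)) ∧
    (∀ j, k1 + 1 < j → ¬ I (k1 + 1) j)}

/-- The co-inversions of a permutation `σ` of `{1,…,n}` (written as the word
`σ(1)…σ(n)`): pairs `(σ(i), σ(j))` with `i < j` and `σ(i) > σ(j)`. -/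
def coinv (n : ℕ) (σ : Equiv.Perm (Fin n)) : Set (Fin n × Fin n) :=
  {p | ∃ i j : Fin n, i < j ∧ σ j < σ i ∧ p = (σ i, σ j)}

/-!
Encode a binary tree by its Huang–Tamari bracket vector, the sizes of the right subtrees
of its nodes. A right rotation raises exactly one entry; conversely, if the vector of `S`
lies pointwise below that of `T` (same size), rotating `S` at the parent of the first
node where they differ keeps it below `T`. Hence `S ≤ T` iff `bracket S ≤ bracket T`.
Since the right subtree of `b` carries the labels `b+1, …, b + bracket T b`, the
decreasing forest `dec(T)` is the bracket vector in disguise, so `dec(S) ⊆ dec(T)` iff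
`S ≤ T`. Mirroring reverses the Tamari order and the labels and exchanges `inc` with
`dec`, so `inc(T) ⊆ inc(S)` iff `S ≤ T`. Finally the relations `a ≺ b` of `IP[T,T']` with
`a > b` are those of `dec(T)` and those with `a < b` those of `inc(T')`.
-/

namespace BinTree

open Function

/-- The Huang–Tamari bracket vector: `bracket T x` is the size of the right subtree of the
node labelled `x`, and `0` for `x ∉ {1,…,size T}`. -/
def bracket : BinTree → ℕ → ℕ
  | leaf, _ => 0
  | node l r, x =>
      if x = l.size + 1 then r.size
      else if x ≤ l.size then bracket l x
      else bracket r (x - (l.size + 1))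

section Bracket

variable {l r : BinTree} {x : ℕ}

lemma bracket_node_root (h : x = l.size + 1) : bracket (node l r) x = r.size := by
  simp [bracket, h]

lemma bracket_node_of_le (h : x ≤ l.size) : bracket (node l r) x = bracket l x := by
  simp [bracket, h, show x ≠ l.size + 1 by omega]

lemma bracket_node_of_gt (h : l.size + 1 < x) :
    bracket (node l r) x = bracket r (x - (l.size + 1)) := by
  simp [bracket, show x ≠ l.size + 1 by omega, show ¬ x ≤ l.size by omega]

end Bracket

@[simp] lemma bracket_zero (T : BinTree) : bracket T 0 = 0 := by
  cases T with
  | leaf => rfl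
  | node l r => rw [bracket_node_of_le (Nat.zero_le _), bracket_zero l]

lemma bracket_of_size_lt {T : BinTree} {x : ℕ} (h : T.size < x) : bracket T x = 0 := by
  induction T generalizing x with
  | leaf => rfl
  | node l r _ ihr =>
      simp only [size] at h
      rw [bracket_node_of_gt (by omega), ihr (by omega)]

lemma add_bracket_le_size {T : BinTree} {x : ℕ} (h : x ≤ T.size) :
    x + bracket T x ≤ T.size := by
  induction T generalizing x with
  | leaf => simpa [bracket] using h
  | node l r ihl ihr =>
      simp only [size] at h ⊢
      rcases Nat.lt_trichotomy x (l.size + 1) with hx | hx | hx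
      · rw [bracket_node_of_le (by omega)]; have := ihl (x := x) (by omega); omega
      · rw [bracket_node_root hx]; omega
      · rw [bracket_node_of_gt hx]; have := ihr (x := x - (l.size + 1)) (by omega); omega

lemma bracket_pos_bounds {T : BinTree} {x : ℕ} (h : 0 < bracket T x) :
    1 ≤ x ∧ x ≤ T.size := by
  constructor
  · by_contra hx
    simp_all
  · by_contra hx
    simp_all [bracket_of_size_lt (not_le.mp hx)]

lemma bracket_node_add {l r : BinTree} {x : ℕ} (hx : 1 ≤ x) :
    bracket (node l r) (x + (l.size + 1)) = bracket r x := by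
  rw [bracket_node_of_gt (by omega), Nat.add_sub_cancel]

lemma bracket_nested {T : BinTree} {x y : ℕ} (hxy : x < y) (hy : y ≤ x + bracket T x) :
    y + bracket T y ≤ x + bracket T x := by
  induction T generalizing x y with
  | leaf => simp only [bracket] at hy; omega
  | node l r ihl ihr =>
      rcases Nat.lt_trichotomy x (l.size + 1) with hx | hx | hx
      · have hxl : x ≤ l.size := by omega
        rw [bracket_node_of_le hxl] at hy ⊢
        have := add_bracket_le_size hxl
        rw [bracket_node_of_le (x := y) (by omega)]
        exact ihl hxy hy
      · rw [bracket_node_root hx] at hy ⊢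
        obtain ⟨y', rfl⟩ : ∃ y', y = y' + (l.size + 1) := ⟨y - (l.size + 1), by omega⟩
        rw [bracket_node_add (by omega)]
        have := add_bracket_le_size (T := r) (x := y') (by omega)
        omega
      · obtain ⟨x', rfl⟩ : ∃ x', x = x' + (l.size + 1) := ⟨x - (l.size + 1), by omega⟩
        obtain ⟨y', rfl⟩ : ∃ y', y = y' + (l.size + 1) := ⟨y - (l.size + 1), by omega⟩
        rw [bracket_node_add (by omega)] at hy ⊢
        rw [bracket_node_add (by omega)]
        have := ihr (x := x') (y := y') (by omega) (by omega)
        omega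

lemma bracket_rotate_root (A B C : BinTree) :
    bracket (node A (node B C)) =
      update (bracket (node (node A B) C)) (A.size + 1) (B.size + C.size + 1) := by
  funext z
  simp only [bracket, size, update_apply]
  split_ifs <;> first | omega | (congr 1; omega)

lemma bracket_node_update_left {l l' r : BinTree} {x v : ℕ} (hsz : l'.size = l.size)
    (hx : x ≤ l.size) (h : bracket l' = update (bracket l) x v) :
    bracket (node l' r) = update (bracket (node l r)) x v := by
  funext z
  have hz := congrFun h z
  simp only [bracket, hsz, update_apply] at hz ⊢
  split_ifs at hz ⊢ <;> omega

lemma bracket_node_update_right {l r r' : BinTree} {x v : ℕ} (hsz : r'.size = r.size)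
    (hx : 1 ≤ x) (h : bracket r' = update (bracket r) x v) :
    bracket (node l r') = update (bracket (node l r)) (x + (l.size + 1)) v := by
  funext z
  have hz := congrFun h (z - (l.size + 1))
  simp only [bracket, hsz, update_apply] at hz ⊢
  split_ifs at hz ⊢ <;> omega

lemma Rot.size_eq {S S' : BinTree} (h : Rot S S') : S.size = S'.size := by
  induction h <;> simp only [size] at * <;> omega

lemma Rot.exists_bracket_eq_update {S S' : BinTree} (h : Rot S S') :
    ∃ x v, bracket S x < v ∧ bracket S' = update (bracket S) x v := by
  induction h with
  | root A B C =>
      refine ⟨A.size + 1, B.size + C.size + 1, ?_, bracket_rotate_root A B C⟩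
      rw [bracket_node_of_le (by simp only [size]; omega), bracket_node_root rfl]
      omega
  | @left L L' R hL ih =>
      obtain ⟨x, v, hlt, hL'⟩ := ih
      have hx := bracket_pos_bounds (T := L') (x := x) (by rw [hL', update_self]; omega)
      refine ⟨x, v, ?_, bracket_node_update_left hL.size_eq.symm (hL.size_eq ▸ hx.2) hL'⟩
      rwa [bracket_node_of_le (hL.size_eq ▸ hx.2)]
  | @right L R R' hR ih =>
      obtain ⟨x, v, hlt, hR'⟩ := ih
      have hx := bracket_pos_bounds (T := R') (x := x) (by rw [hR', update_self]; omega)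
      refine ⟨x + (L.size + 1), v, ?_, bracket_node_update_right hR.size_eq.symm hx.1 hR'⟩
      rwa [bracket_node_add hx.1]

lemma Rot.bracket_le {S S' : BinTree} (h : Rot S S') : bracket S ≤ bracket S' := by
  obtain ⟨x, v, hlt, heq⟩ := h.exists_bracket_eq_update
  rw [heq, le_update_self_iff]
  exact hlt.le

lemma TamariLE.bracket_le {S T : BinTree} (h : TamariLE S T) : bracket S ≤ bracket T := by
  induction h with
  | refl => exact le_rfl
  | tail _ hr ih => exact ih.trans hr.bracket_le

lemma bracket_left_subtree (l r : BinTree) (z : ℕ) :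
    bracket l z = if z ≤ l.size then bracket (node l r) z else 0 := by
  split_ifs with hz
  · rw [bracket_node_of_le hz]
  · exact bracket_of_size_lt (by omega)

lemma bracket_right_subtree (l r : BinTree) (z : ℕ) :
    bracket r z = if 1 ≤ z then bracket (node l r) (z + (l.size + 1)) else 0 := by
  split_ifs with hz
  · rw [bracket_node_add hz]
  · simp [show z = 0 by omega]

lemma size_left_le_of_bracket_eq {A B C D : BinTree} (hsz : (node A B).size = (node C D).size)
    (h : bracket (node A B) = bracket (node C D)) : A.size ≤ C.size := by
  by_contra hlt
  have hC := congrFun h (C.size + 1)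
  rw [bracket_node_of_le (by omega), bracket_node_root rfl] at hC
  have := add_bracket_le_size (T := A) (x := C.size + 1) (by omega)
  simp only [size] at hsz
  omega

lemma eq_of_bracket_eq {S T : BinTree} (hsz : S.size = T.size) (h : bracket S = bracket T) :
    S = T := by
  induction S generalizing T with
  | leaf => cases T <;> simp_all [size]
  | node A B ihA ihB =>
      cases T with
      | leaf => simp [size] at hsz
      | node C D =>
          have hAC : A.size = C.size :=
            le_antisymm (size_left_le_of_bracket_eq hsz h)
              (size_left_le_of_bracket_eq hsz.symm h.symm)
          have hBD : B.size = D.size := by simp only [size] at hsz; omega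
          have hbA : bracket A = bracket C := funext fun z => by
            rw [bracket_left_subtree A B, bracket_left_subtree C D, h, hAC]
          have hbB : bracket B = bracket D := funext fun z => by
            rw [bracket_right_subtree A B, bracket_right_subtree C D, h, hAC]
          rw [ihA hAC hbA, ihB hBD hbB]

lemma exists_rot_or_span_end_of_span_eq {l r : BinTree} {x : ℕ} (hx : 1 ≤ x)
    (hspan : x + bracket l x = l.size) :
    (∃ S', Rot (node l r) S' ∧
      bracket S' = update (bracket (node l r)) x (bracket l x + r.size + 1)) ∨
    ∃ q, 1 ≤ q ∧ q < x ∧ q + bracket l q = l.size := by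
  cases l with
  | leaf => simp only [bracket, size] at hspan; omega
  | node A B =>
      rcases Nat.lt_trichotomy x (A.size + 1) with hxA | rfl | hxA
      · rw [bracket_node_of_le (by omega)] at hspan
        have := add_bracket_le_size (T := A) (x := x) (by omega)
        simp only [size] at hspan
        omega
      · rw [bracket_node_root rfl]
        exact .inl ⟨node A (node B r), Rot.root A B r, bracket_rotate_root A B r⟩
      · exact .inr ⟨A.size + 1, by omega, hxA, by rw [bracket_node_root rfl, size]; omega⟩

/-- When the span `[x, x + bracket S x]` of `x` ends below `S.size`, `x` is either a left
child, whose parent `x + bracket S x + 1` can be rotated to the right, or some `q < x`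
has a span with the same end. -/
lemma exists_rot_or_span_end (S : BinTree) {x : ℕ} (hx : 1 ≤ x)
    (hlt : x + bracket S x < S.size) :
    (∃ S', Rot S S' ∧
      bracket S' = update (bracket S) x (bracket S x + bracket S (x + bracket S x + 1) + 1)) ∨
    ∃ q, 1 ≤ q ∧ q < x ∧ q + bracket S q = x + bracket S x := by
  induction S generalizing x with
  | leaf => simp [size] at hlt
  | node l r ihl ihr =>
      rcases Nat.lt_trichotomy x (l.size + 1) with hxl | hxl | hxl
      · have hxl : x ≤ l.size := by omega
        rw [bracket_node_of_le hxl] at hlt ⊢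
        rcases (add_bracket_le_size hxl).lt_or_eq with hspan | hspan
        · rw [bracket_node_of_le hspan]
          rcases ihl hx hspan with ⟨l', hrot, hl'⟩ | ⟨q, hq1, hqx, hq⟩
          · exact .inl ⟨node l' r, hrot.left r,
              bracket_node_update_left hrot.size_eq.symm hxl hl'⟩
          · exact .inr ⟨q, hq1, hqx, by rw [bracket_node_of_le (by omega)]; exact hq⟩
        · rw [hspan, bracket_node_root rfl]
          rcases exists_rot_or_span_end_of_span_eq (r := r) hx hspan with h | ⟨q, hq1, hqx, hq⟩
          · exact .inl h
          · exact .inr ⟨q, hq1, hqx, by rw [bracket_node_of_le (by omega)]; exact hq⟩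
      · rw [bracket_node_root hxl] at hlt
        simp only [size] at hlt
        omega
      · obtain ⟨x', rfl⟩ : ∃ x', x = x' + (l.size + 1) := ⟨x - (l.size + 1), by omega⟩
        have hx' : 1 ≤ x' := by omega
        rw [bracket_node_add hx'] at hlt ⊢
        rw [show x' + (l.size + 1) + bracket r x' + 1 = x' + bracket r x' + 1 + (l.size + 1)
          by omega, bracket_node_add (by omega)]
        simp only [size] at hlt
        rcases ihr hx' (by omega) with ⟨r', hrot, hr'⟩ | ⟨q, hq1, hqx, hq⟩
        · exact .inl ⟨node l r', hrot.right l,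
            bracket_node_update_right hrot.size_eq.symm hx' hr'⟩
        · refine .inr ⟨q + (l.size + 1), by omega, by omega, ?_⟩
          rw [bracket_node_add hq1]
          omega

/-- The rotation at the parent of the least `x` where `bracket S` and `bracket T` differ
stays below `T`: the alternative of `exists_rot_or_span_end` contradicts minimality. -/
lemma exists_rot_bracket_le {S T : BinTree} (hsz : S.size = T.size)
    (hle : bracket S ≤ bracket T) (hne : bracket S ≠ bracket T) :
    ∃ S', Rot S S' ∧ bracket S' ≤ bracket T := by
  classical
  have hex : ∃ x, bracket S x < bracket T x := by
    by_contra! h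
    exact hne (le_antisymm hle h)
  obtain ⟨x, hx, hmin⟩ :
      ∃ x, bracket S x < bracket T x ∧ ∀ q < x, ¬ bracket S q < bracket T q :=
    ⟨Nat.find hex, Nat.find_spec hex, fun _ => Nat.find_min hex⟩
  have hxT := bracket_pos_bounds (T := T) (x := x) (by omega)
  have hlt : x + bracket S x < S.size := by
    have := add_bracket_le_size hxT.2
    omega
  rcases exists_rot_or_span_end S hxT.1 hlt with ⟨S', hrot, hS'⟩ | ⟨q, hq1, hqx, hq⟩
  · refine ⟨S', hrot, ?_⟩
    rw [hS', update_le_iff]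
    refine ⟨?_, fun j _ => hle j⟩
    have := bracket_nested (T := T) (x := x) (y := x + bracket S x + 1) (by omega) (by omega)
    have : bracket S (x + bracket S x + 1) ≤ bracket T (x + bracket S x + 1) := hle _
    omega
  · refine absurd ?_ (hmin q hqx)
    have hSq : bracket S q ≤ bracket T q := hle q
    have := bracket_nested (T := T) hqx (by omega)
    omega

lemma tamariLE_of_bracket_le {S T : BinTree} (hsz : S.size = T.size)
    (hle : bracket S ≤ bracket T) : TamariLE S T := by
  by_cases heq : bracket S = bracket T
  · rw [eq_of_bracket_eq hsz heq]
    exact .refl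
  obtain ⟨S', hrot, hS'⟩ := exists_rot_bracket_le hsz hle heq
  exact .head hrot (tamariLE_of_bracket_le (hrot.size_eq ▸ hsz) hS')
termination_by ∑ z ∈ Finset.range (T.size + 1), (bracket T z - bracket S z)
decreasing_by
  obtain ⟨x, v, hlt, heq⟩ := hrot.exists_bracket_eq_update
  have hv : v ≤ bracket T x := by simpa [heq] using hS' x
  refine Finset.sum_lt_sum (fun z _ => Nat.sub_le_sub_left (hrot.bracket_le z) _)
    ⟨x, ?_, by rw [heq, update_self]; omega⟩
  exact Finset.mem_range.mpr
    (Nat.lt_succ_of_le (bracket_pos_bounds (by omega : 0 < bracket T x)).2)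

lemma tamariLE_iff_bracket_le {S T : BinTree} (hsz : S.size = T.size) :
    TamariLE S T ↔ bracket S ≤ bracket T :=
  ⟨TamariLE.bracket_le, tamariLE_of_bracket_le hsz⟩

lemma inSub_bounds {T : BinTree} {a b : ℕ} (h : inSub T a b) :
    1 ≤ a ∧ a ≤ T.size ∧ 1 ≤ b ∧ b ≤ T.size := by
  induction T generalizing a b with
  | leaf => exact h.elim
  | node l r ihl ihr =>
      simp only [size]
      rcases h with h | h | ⟨_, _, h⟩
      · omega
      · have := ihl h; omega
      · have := ihr h; omega

lemma inSub_iff_bracket {T : BinTree} {a b : ℕ} (hba : b < a) :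
    inSub T a b ↔ 1 ≤ b ∧ a ≤ b + bracket T b := by
  induction T generalizing a b with
  | leaf => simp only [inSub, bracket, false_iff]; omega
  | node l r ihl ihr =>
      rcases Nat.lt_trichotomy b (l.size + 1) with hb | hb | hb
      · rw [bracket_node_of_le (by omega), ← ihl hba]
        constructor
        · rintro (h | h | h)
          · omega
          · exact h
          · omega
        · exact fun h => .inr (.inl h)
      · rw [bracket_node_root hb]
        constructor
        · rintro (h | h | h)
          · omega
          · have := inSub_bounds h; omega
          · omega
        · exact fun h => .inl ⟨hb, by omega, by omega⟩
      · obtain ⟨b', rfl⟩ : ∃ b', b = b' + (l.size + 1) := ⟨b - (l.size + 1), by omega⟩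
        obtain ⟨a', rfl⟩ : ∃ a', a = a' + (l.size + 1) := ⟨a - (l.size + 1), by omega⟩
        rw [bracket_node_add (by omega)]
        have ih := ihr (a := a') (b := b') (by omega)
        simp only [inSub, Nat.add_sub_cancel]
        constructor
        · rintro (h | h | ⟨_, _, h⟩)
          · omega
          · have := inSub_bounds h; omega
          · have := ih.mp h; omega
        · exact fun h => .inr (.inr ⟨by omega, by omega, ih.mpr ⟨by omega, by omega⟩⟩)

lemma decRel_iff_bracket {T : BinTree} {a b : ℕ} :
    decRel T a b ↔ 1 ≤ b ∧ b < a ∧ a ≤ b + bracket T b := by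
  constructor
  · rintro ⟨hba, -, hs⟩
    have := (inSub_iff_bracket hba).mp hs
    exact ⟨this.1, hba, this.2⟩
  · rintro ⟨h1, hba, h3⟩
    exact ⟨hba, by omega, (inSub_iff_bracket hba).mpr ⟨h1, h3⟩⟩

lemma decRel_subset_iff_tamariLE {S T : BinTree} (hsz : S.size = T.size) :
    (∀ a b, decRel S a b → decRel T a b) ↔ TamariLE S T := by
  rw [tamariLE_iff_bracket_le hsz]
  simp only [decRel_iff_bracket]
  constructor
  · intro h z
    show bracket S z ≤ bracket T z
    by_cases hz : bracket S z = 0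
    · omega
    have hz1 := (bracket_pos_bounds (T := S) (x := z) (by omega)).1
    have := (h (z + bracket S z) z ⟨hz1, by omega, le_rfl⟩).2.2
    omega
  · intro h a b ⟨h1, h2, h3⟩
    have : bracket S b ≤ bracket T b := h b
    exact ⟨h1, h2, by omega⟩

def mirror : BinTree → BinTree
  | leaf => leaf
  | node l r => node (mirror r) (mirror l)

@[simp] lemma size_mirror (T : BinTree) : T.mirror.size = T.size := by
  induction T with
  | leaf => rfl
  | node l r ihl ihr => simp only [mirror, size, ihl, ihr]; omega

@[simp] lemma mirror_mirror (T : BinTree) : T.mirror.mirror = T := by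
  induction T with
  | leaf => rfl
  | node l r ihl ihr => simp only [mirror, ihl, ihr]

lemma Rot.mirror {S T : BinTree} (h : Rot S T) : Rot T.mirror S.mirror := by
  induction h with
  | root A B C => exact .root _ _ _
  | left R _ ih => exact .right _ ih
  | right L _ ih => exact .left _ ih

lemma TamariLE.mirror {S T : BinTree} (h : TamariLE S T) : TamariLE T.mirror S.mirror := by
  induction h with
  | refl => exact .refl
  | tail _ hr ih => exact .head hr.mirror ih

lemma tamariLE_mirror_iff {S T : BinTree} : TamariLE T.mirror S.mirror ↔ TamariLE S T :=
  ⟨fun h => by simpa using h.mirror, TamariLE.mirror⟩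

lemma inSub_mirror {T : BinTree} {a b : ℕ} (h : inSub T a b) :
    inSub T.mirror (T.size + 1 - a) (T.size + 1 - b) := by
  induction T generalizing a b with
  | leaf => exact h.elim
  | node l r ihl ihr =>
      have := inSub_bounds h
      simp only [size] at this
      simp only [inSub, mirror, size, size_mirror]
      rcases h with ⟨hb, ha1, ha2⟩ | hs | ⟨ha, hb, hs⟩
      · exact .inl ⟨by omega, by omega, by omega⟩
      · have := inSub_bounds hs
        refine .inr (.inr ⟨by omega, by omega, ?_⟩)
        rw [show l.size + r.size + 1 + 1 - a - (r.size + 1) = l.size + 1 - a by omega,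
          show l.size + r.size + 1 + 1 - b - (r.size + 1) = l.size + 1 - b by omega]
        exact ihl hs
      · refine .inr (.inl ?_)
        have := ihr hs
        rwa [show r.size + 1 - (a - (l.size + 1)) = l.size + r.size + 1 + 1 - a by omega,
          show r.size + 1 - (b - (l.size + 1)) = l.size + r.size + 1 + 1 - b by omega] at this

lemma decRel_mirror_iff {T : BinTree} {a b : ℕ} :
    decRel T.mirror a b ↔ (1 ≤ a ∧ a ≤ T.size ∧ 1 ≤ b ∧ b ≤ T.size) ∧
      incRel T (T.size + 1 - a) (T.size + 1 - b) := by
  constructor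
  · rintro ⟨hba, hne, hs⟩
    have hbd := inSub_bounds hs
    have hm := inSub_mirror hs
    simp only [size_mirror, mirror_mirror] at hbd hm
    exact ⟨hbd, by omega, by omega, hm⟩
  · rintro ⟨hbd, hab, hne, hs⟩
    have hm := inSub_mirror hs
    rw [Nat.sub_sub_self (by omega), Nat.sub_sub_self (by omega)] at hm
    exact ⟨by omega, by omega, hm⟩

lemma incRel_subset_iff_tamariLE {S T : BinTree} (hsz : S.size = T.size) :
    (∀ a b, incRel T a b → incRel S a b) ↔ TamariLE S T := by
  rw [← tamariLE_mirror_iff, ← decRel_subset_iff_tamariLE (by simp [hsz])]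
  constructor
  · intro h a b hab
    rw [decRel_mirror_iff] at hab ⊢
    rw [hsz]
    exact ⟨hab.1, h _ _ hab.2⟩
  · intro h a b hab
    have hbd := inSub_bounds hab.2.2
    have hm : decRel T.mirror (T.size + 1 - a) (T.size + 1 - b) := by
      rw [decRel_mirror_iff, Nat.sub_sub_self (by omega), Nat.sub_sub_self (by omega)]
      exact ⟨by omega, hab⟩
    have := (decRel_mirror_iff.mp (h _ _ hm)).2
    rwa [hsz, Nat.sub_sub_self (by omega), Nat.sub_sub_self (by omega)] at this

lemma IPrel_subset_iff {S S' T T' : BinTree} :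
    (∀ a b, IPrel S S' a b → IPrel T T' a b) ↔
      (∀ a b, decRel S a b → decRel T a b) ∧ (∀ a b, incRel S' a b → incRel T' a b) := by
  constructor
  · intro h
    refine ⟨fun a b hab => ?_, fun a b hab => ?_⟩
    · exact (h a b (.inl hab)).resolve_right fun h' => by have := hab.1; have := h'.1; omega
    · exact (h a b (.inr hab)).resolve_left fun h' => by have := hab.1; have := h'.1; omega
  · rintro ⟨hdec, hinc⟩ a b (hab | hab)
    exacts [.inl (hdec a b hab), .inr (hinc a b hab)]

end BinTree

theorem interval_inclusion_general (n : ℕ) (T1 T1' T2 T2' : BinTree)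
    (h1 : T1.size = n) (h1' : T1'.size = n) (h2 : T2.size = n) (h2' : T2'.size = n) :
    (TamariLE T2 T1 ∧ TamariLE T1' T2') ↔
      ∀ a b, IPrel T2 T2' a b → IPrel T1 T1' a b := by
  rw [IPrel_subset_iff, decRel_subset_iff_tamariLE (h2.trans h1.symm),
    incRel_subset_iff_tamariLE (h1'.trans h2'.symm)]

/-- Let `[T1,T1']` and `[T2,T2']` be two Tamari intervals of size `n` with
interval-posets `I1 = IP[T1,T1']` and `I2 = IP[T2,T2']`. Then `[T1,T1'] ⊆ [T2,T2']`
(i.e. `T2 ≤ T1` and `T1' ≤ T2'`) iff every relation of `I2` is a relation of `I1`. -/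
theorem interval_inclusion (n : ℕ) (T1 T1' T2 T2' : BinTree)
    (h1 : T1.size = n) (h1' : T1'.size = n) (h2 : T2.size = n) (h2' : T2'.size = n)
    (ht1 : TamariLE T1 T1') (ht2 : TamariLE T2 T2') :
    (TamariLE T2 T1 ∧ TamariLE T1' T2') ↔
      ∀ a b, IPrel T2 T2' a b → IPrel T1 T1' a b :=
  interval_inclusion_general n T1 T1' T2 T2' h1 h1' h2 h2'
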